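/- Let η: U^n → B^n be the standard transformation from the upper half-space model to the conformal ball model (η = σ∘ρ, where ρ is reflection in the hyperplane x_n = 0 and σ is inversion in the sphere S(e_n, √2)). Let v ∈ ℝ^{n-1}×{0} be a nonzero vector, a ∈ closure(U^n), and l(t) = tv + a for t ≥ 0, with L(t) = η(l(t)). Then lim_{t→∞} (L(t) − e_n)/|L(t) − e_n| = v/|v|. Consequently the strict transform of the curve L under blow-up at e_n meets the exceptional sphere exactly in the point (e_n, v/|v|). -/

import Mathlib

open Filter Topology

noncomputable section

/-- The last basis vector `e_n` of `ℝ^{n+1}`. -/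
def eLast (n : ℕ) : EuclideanSpace ℝ (Fin (n + 1)) :=
  EuclideanSpace.single (Fin.last n) 1

/-- The reflection `ρ(x) = (x₁, …, x_{n-1}, -x_n)` in the hyperplane `x_n = 0`. -/
def reflLast {n : ℕ} (x : EuclideanSpace ℝ (Fin (n + 1))) :
    EuclideanSpace ℝ (Fin (n + 1)) :=
  x - (2 * x (Fin.last n)) • eLast n

/-- The inversion `σ(y) = e_n + (√2/|y - e_n|)² (y - e_n)` in the sphere `S(e_n, √2)`. -/
def invSqrtTwo {n : ℕ} (y : EuclideanSpace ℝ (Fin (n + 1))) :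
    EuclideanSpace ℝ (Fin (n + 1)) :=
  eLast n + (Real.sqrt 2 / ‖y - eLast n‖) ^ 2 • (y - eLast n)

/-- The standard transformation `η = σ ∘ ρ` from the upper half-space model to the ball. -/
def stdTransform {n : ℕ} (x : EuclideanSpace ℝ (Fin (n + 1))) :
    EuclideanSpace ℝ (Fin (n + 1)) :=
  invSqrtTwo (reflLast x)

/-- The blow-up of `ℝ^{n+1}` at `e_n` (pairs of a point with a unit direction). -/
def blowUpELast (n : ℕ) :
    Set (EuclideanSpace ℝ (Fin (n + 1)) × EuclideanSpace ℝ (Fin (n + 1))) :=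
  {xt | ‖xt.2‖ = 1 ∧ ‖xt.1 - eLast n‖ • xt.2 = xt.1 - eLast n}

end

/-- The normalized direction of `t v + b` tends to that of `v` as `t → ∞`. -/
lemma dir_tendsto_aux {E : Type*} [NormedAddCommGroup E] [NormedSpace ℝ E]
    (v b : E) (hv : v ≠ 0) :
    Tendsto (fun t : ℝ => ‖t • v + b‖⁻¹ • (t • v + b)) atTop (nhds (‖v‖⁻¹ • v)) := by
  have hc : ContinuousAt (fun x : E => ‖x‖⁻¹ • x) v := by
    exact ContinuousAt.smul (M := ℝ) (X := E)
      (ContinuousAt.inv₀ continuous_norm.continuousAt (norm_ne_zero_iff.mpr hv)) continuousAt_id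
  have h1 : Tendsto (fun t : ℝ => t⁻¹ • b) atTop (nhds 0) := by
    simpa using (tendsto_inv_atTop_zero : Tendsto (fun r : ℝ => r⁻¹) atTop (nhds 0)).smul_const b
  have h0 : Tendsto (fun t : ℝ => v + t⁻¹ • b) atTop (nhds v) := by
    simpa using tendsto_const_nhds.add h1
  have hcomp := hc.tendsto.comp h0
  apply hcomp.congr'
  filter_upwards [eventually_gt_atTop (0 : ℝ)] with t ht
  have ht' : t ≠ 0 := ne_of_gt ht
  have key : t • v + b = t • (v + t⁻¹ • b) := by
    rw [smul_add, smul_smul, mul_inv_cancel₀ ht', one_smul]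
  show ‖v + t⁻¹ • b‖⁻¹ • (v + t⁻¹ • b) = ‖t • v + b‖⁻¹ • (t • v + b)
  rw [key, norm_smul, Real.norm_eq_abs, abs_of_pos ht, smul_smul]
  congr 1
  rw [mul_inv, mul_comm t⁻¹, mul_assoc, inv_mul_cancel₀ ht', mul_one]

/-- Let `v ≠ 0` be a horizontal vector, `a` in the closed upper half-space,
`l(t) = tv + a` and `L = η ∘ l`.  Then `(L(t) - e_n)/|L(t) - e_n| → v/|v|` as `t → ∞`;
consequently the strict transform of the curve `L` under blowing up at `e_n` meets the
exceptional sphere exactly in the point `(e_n, v/|v|)`. -/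
theorem strict_transform_of_line {n : ℕ}
    (v a : EuclideanSpace ℝ (Fin (n + 1)))
    (hv : v ≠ 0) (hvlast : v (Fin.last n) = 0) (halast : 0 ≤ a (Fin.last n))
    (L : ℝ → EuclideanSpace ℝ (Fin (n + 1)))
    (hL : ∀ t, L t = stdTransform (t • v + a)) :
    Tendsto (fun t => ‖L t - eLast n‖⁻¹ • (L t - eLast n)) atTop (nhds (‖v‖⁻¹ • v)) ∧
      closure {xt ∈ blowUpELast n | ∃ t : ℝ, 0 ≤ t ∧ xt.1 = L t ∧ xt.1 ≠ eLast n} ∩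
          {xt | xt.1 = eLast n} =
        {(eLast n, ‖v‖⁻¹ • v)} := by
  set b : EuclideanSpace ℝ (Fin (n + 1)) := reflLast a - eLast n with hb
  set w : ℝ → EuclideanSpace ℝ (Fin (n + 1)) := fun t => t • v + b with hwdef
  have heLast_last : eLast n (Fin.last n) = 1 := by
    simp [eLast, EuclideanSpace.single_apply]
  -- value of b at the last coordinate
  have hblast : b (Fin.last n) = -(a (Fin.last n)) - 1 := by
    simp only [hb, reflLast]
    simp [heLast_last]
    ring
  have hblast_ne : b (Fin.last n) ≠ 0 := by rw [hblast]; intro h; linarith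
  -- w t is never zero
  have hwlast : ∀ t : ℝ, w t (Fin.last n) = b (Fin.last n) := by
    intro t; simp [hwdef, hvlast]
  have hw0 : ∀ t : ℝ, w t ≠ 0 := by
    intro t h
    apply hblast_ne
    rw [← hwlast t, h]; rfl
  have hwpos : ∀ t : ℝ, 0 < ‖w t‖ := fun t => norm_pos_iff.mpr (hw0 t)
  -- the reflected line
  have hrefl : ∀ t : ℝ, reflLast (t • v + a) - eLast n = w t := by
    intro t
    have happ : (t • v + a : EuclideanSpace ℝ (Fin (n + 1))) (Fin.last n)
        = a (Fin.last n) := by simp [hvlast]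
    simp only [reflLast, happ, hwdef, hb]
    abel
  -- formula for L t - e
  have hLsub : ∀ t : ℝ, L t - eLast n = (2 / ‖w t‖ ^ 2) • w t := by
    intro t
    rw [hL, stdTransform, invSqrtTwo, hrefl]
    have h2 : (Real.sqrt 2 / ‖w t‖) ^ 2 = 2 / ‖w t‖ ^ 2 := by
      rw [div_pow, Real.sq_sqrt (by norm_num : (2:ℝ) ≥ 0)]
    rw [h2]; abel
  have hcpos : ∀ t : ℝ, 0 < 2 / ‖w t‖ ^ 2 := by
    intro t; have := hwpos t; positivity
  have hnormL : ∀ t : ℝ, ‖L t - eLast n‖ = 2 / ‖w t‖ := by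
    intro t
    rw [hLsub, norm_smul, Real.norm_eq_abs, abs_of_pos (hcpos t)]
    have := (hwpos t).ne'
    field_simp
  have hnormLpos : ∀ t : ℝ, 0 < ‖L t - eLast n‖ := by
    intro t; rw [hnormL]; have := hwpos t; positivity
  have hLne : ∀ t : ℝ, L t ≠ eLast n := by
    intro t h
    have h1 := hnormLpos t
    rw [h, sub_self, norm_zero] at h1
    exact lt_irrefl 0 h1
  -- the unit direction of L t - e equals that of w t
  have hdir : ∀ t : ℝ, ‖L t - eLast n‖⁻¹ • (L t - eLast n) = ‖w t‖⁻¹ • w t := by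
    intro t
    rw [hnormL, hLsub, smul_smul]
    congr 1
    have := (hwpos t).ne'
    field_simp
  -- part 1
  have hpart1 : Tendsto (fun t => ‖L t - eLast n‖⁻¹ • (L t - eLast n)) atTop
      (nhds (‖v‖⁻¹ • v)) := by
    simp only [hdir]
    exact dir_tendsto_aux v b hv
  refine ⟨hpart1, ?_⟩
  -- norm bounds for w
  have hub : ∀ t : ℝ, 0 ≤ t → ‖w t‖ ≤ t * ‖v‖ + ‖b‖ := by
    intro t ht
    calc ‖w t‖ ≤ ‖t • v‖ + ‖b‖ := norm_add_le _ _
      _ = t * ‖v‖ + ‖b‖ := by rw [norm_smul, Real.norm_eq_abs, abs_of_nonneg ht]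
  have hlb : ∀ t : ℝ, 0 ≤ t → t * ‖v‖ - ‖b‖ ≤ ‖w t‖ := by
    intro t ht
    have h1 : ‖t • v‖ ≤ ‖w t‖ + ‖b‖ := by
      have := norm_add_le (w t) (-b)
      simpa [hwdef] using this
    rw [norm_smul, Real.norm_eq_abs, abs_of_nonneg ht] at h1
    linarith
  have hvpos : 0 < ‖v‖ := norm_pos_iff.mpr hv
  -- ‖w t‖ → ∞
  have hwtop : Tendsto (fun t => ‖w t‖) atTop atTop := by
    apply tendsto_atTop_mono' _ _ (tendsto_atTop_add_const_right atTop (-‖b‖)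
      (tendsto_id.atTop_mul_const hvpos))
    filter_upwards [eventually_ge_atTop (0 : ℝ)] with t ht
    have := hlb t ht
    simpa [sub_eq_add_neg] using this
  -- L → e_n
  have hLtend : Tendsto L atTop (nhds (eLast n)) := by
    rw [tendsto_iff_norm_sub_tendsto_zero]
    simp only [hnormL]
    have : Tendsto (fun t => (‖w t‖)⁻¹) atTop (nhds 0) := hwtop.inv_tendsto_atTop
    have h2 := this.const_mul (2:ℝ)
    simpa [div_eq_mul_inv] using h2
  -- the set S
  set S := {xt ∈ blowUpELast n | ∃ t : ℝ, 0 ≤ t ∧ xt.1 = L t ∧ xt.1 ≠ eLast n} with hS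
  apply Set.eq_singleton_iff_unique_mem.mpr
  constructor
  · -- (e, u) belongs
    constructor
    · -- in closure
      have hF : Tendsto (fun t => (L t, ‖L t - eLast n‖⁻¹ • (L t - eLast n))) atTop
          (nhds (eLast n, ‖v‖⁻¹ • v)) := hLtend.prodMk_nhds hpart1
      apply mem_closure_of_tendsto hF
      filter_upwards [eventually_ge_atTop (0 : ℝ)] with t ht
      refine ⟨⟨?_, ?_⟩, t, ht, rfl, hLne t⟩
      · rw [norm_smul, Real.norm_eq_abs, abs_of_pos (inv_pos.mpr (hnormLpos t)),
          inv_mul_cancel₀ (hnormLpos t).ne']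
      · show ‖L t - eLast n‖ • (‖L t - eLast n‖⁻¹ • (L t - eLast n)) = L t - eLast n
        rw [smul_smul, mul_inv_cancel₀ (hnormLpos t).ne', one_smul]
    · rfl
  · -- uniqueness
    rintro ⟨x, u'⟩ ⟨hcl, (hx : x = eLast n)⟩
    subst hx
    obtain ⟨p, hpS, hp⟩ := mem_closure_iff_seq_limit.mp hcl
    choose t ht0 hpt hpne using fun k => (hpS k).2
    -- second components are the directions of w (t k)
    have hsnd : ∀ k, (p k).2 = ‖w (t k)‖⁻¹ • w (t k) := by
      intro k
      have h2 := (hpS k).1.2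
      rw [hpt k] at h2
      calc (p k).2
          = ‖L (t k) - eLast n‖⁻¹ • (‖L (t k) - eLast n‖ • (p k).2) := by
            rw [smul_smul, inv_mul_cancel₀ (hnormLpos (t k)).ne', one_smul]
        _ = ‖L (t k) - eLast n‖⁻¹ • (L (t k) - eLast n) := by rw [h2]
        _ = ‖w (t k)‖⁻¹ • w (t k) := hdir (t k)
    -- first components converge to e_n
    have hfst : Tendsto (fun k => L (t k)) atTop (nhds (eLast n)) := by
      have h1 : Tendsto (fun k => (p k).1) atTop (nhds (eLast n)) :=
        (continuous_fst.tendsto _).comp hp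
      exact h1.congr fun k => hpt k
    -- hence ‖L (t k) - e‖ → 0 within (0, ∞)
    have hn0 : Tendsto (fun k => ‖L (t k) - eLast n‖) atTop (nhdsWithin (0:ℝ) (Set.Ioi 0)) := by
      rw [tendsto_nhdsWithin_iff]
      constructor
      · have := tendsto_iff_norm_sub_tendsto_zero.mp hfst
        exact this
      · exact Eventually.of_forall fun k => hnormLpos (t k)
    -- hence ‖w (t k)‖ → ∞
    have hwn : Tendsto (fun k => ‖w (t k)‖) atTop atTop := by
      have hinv := hn0.inv_tendsto_nhdsGT_zero
      have h2 : Tendsto (fun k => 2 * (‖L (t k) - eLast n‖)⁻¹) atTop atTop :=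
        hinv.const_mul_atTop (by norm_num : (0:ℝ) < 2)
      apply h2.congr
      intro k
      rw [hnormL]
      rw [inv_div]
      ring
    -- hence t k → ∞
    have httop : Tendsto t atTop atTop := by
      have hle : ∀ k, (‖w (t k)‖ - ‖b‖) / ‖v‖ ≤ t k := by
        intro k
        rw [div_le_iff₀ hvpos]
        have := hub (t k) (ht0 k)
        linarith
      apply tendsto_atTop_mono hle
      exact (tendsto_atTop_add_const_right atTop (-‖b‖) hwn).atTop_div_const hvpos |>.congr
        (fun k => by ring_nf)
    -- conclude
    have hu1 : Tendsto (fun k => (p k).2) atTop (nhds (‖v‖⁻¹ • v)) := by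
      have := (dir_tendsto_aux v b hv).comp httop
      apply this.congr
      intro k
      exact (hsnd k).symm
    have hu2 : Tendsto (fun k => (p k).2) atTop (nhds u') :=
      (continuous_snd.tendsto _).comp hp
    have : u' = ‖v‖⁻¹ • v := tendsto_nhds_unique hu2 hu1
    rw [this]
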